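/- arXiv:2503.15018 — 2 statements merged into one kernel-verified Lean document; each statement's English description precedes it below -/
import Mathlib

section
/- For every a > 0, the supremum of H over the interval (-1, 0) equals H(w_+) and is given explicitly by sup_{w ∈ (-1,0)} H(w) = -a²/4 + (1 + a/2)√(a + a²/4) + log(1 + a/2 - √(a + a²/4)). (This explicit expression is the upper tail large deviation rate function r^stat(a) for the stationary system of reflected Brownian motions.) -/
open Real

/-- `H a w = (w² - 1)/2 + (2+a)(w+1) + log(-w)` -/
noncomputable def H (a w : ℝ) : ℝ := (w ^ 2 - 1) / 2 + (2 + a) * (w + 1) + Real.log (-w)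

/-- `w₊ = -1 - a/2 + √(a + a²/4)` -/
noncomputable def wp (a : ℝ) : ℝ := -1 - a / 2 + Real.sqrt (a + a ^ 2 / 4)

/-- The upper tail rate function for the stationary initial condition. -/
noncomputable def rStat (a : ℝ) : ℝ :=
  -a ^ 2 / 4 + (1 + a / 2) * Real.sqrt (a + a ^ 2 / 4) +
    Real.log (1 + a / 2 - Real.sqrt (a + a ^ 2 / 4))

/-!
On `w < 0` one has `H' w = w + (2 + a) + 1/w = (w - w₊)(w - w₋)/w`, where `w₋ < -1 < w₊ < 0`
are the two roots of `w² + (2 + a) w + 1`. So `H` increases on `(w₋, w₊]` and decreases on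
`[w₊, 0)`, and its supremum over `(-1, 0)` is attained at `w₊`. Evaluating `H` at `w₊` with
`√(a + a²/4)² = a + a²/4` gives `rStat a`.
-/

open Set

/-- The paper's `w₋`, the other critical point of `H a`. -/
noncomputable def wm (a : ℝ) : ℝ := -1 - a / 2 - √(a + a ^ 2 / 4)

theorem isMaxOn_of_hasDerivAt_of_sign {f f' : ℝ → ℝ} {l b r : ℝ}
    (hf : ∀ x ∈ Ioo l r, HasDerivAt f (f' x) x) (hb : b ∈ Ioo l r)
    (hleft : ∀ x ∈ Ioo l b, 0 ≤ f' x) (hright : ∀ x ∈ Ioo b r, f' x ≤ 0) :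
    IsMaxOn f (Ioo l r) b := by
  have hcont : ContinuousOn f (Ioo l r) := fun x hx => (hf x hx).continuousAt.continuousWithinAt
  have hmono : MonotoneOn f (Ioc l b) := by
    refine monotoneOn_of_hasDerivWithinAt_nonneg (convex_Ioc l b)
      (hcont.mono (Ioc_subset_Ioo_right hb.2)) (fun x hx => ?_) (by simpa only [interior_Ioc])
    rw [interior_Ioc] at hx ⊢
    exact (hf x (Ioo_subset_Ioo_right hb.2.le hx)).hasDerivWithinAt
  have hanti : AntitoneOn f (Ico b r) := by
    refine antitoneOn_of_hasDerivWithinAt_nonpos (convex_Ico b r)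
      (hcont.mono (Ico_subset_Ioo_left hb.1)) (fun x hx => ?_) (by simpa only [interior_Ico])
    rw [interior_Ico] at hx ⊢
    exact (hf x (Ioo_subset_Ioo_left hb.1.le hx)).hasDerivWithinAt
  intro x hx
  rcases le_total x b with hxb | hbx
  · exact hmono ⟨hx.1, hxb⟩ ⟨hb.1, le_rfl⟩ hxb
  · exact hanti ⟨le_rfl, hb.2⟩ ⟨hbx, hx.2⟩ hbx

theorem hasDerivAt_H (a : ℝ) {w : ℝ} (hw : w ≠ 0) :
    HasDerivAt (H a) (w + (2 + a) + w⁻¹) w := by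
  have hpoly : HasDerivAt (fun x : ℝ => (x ^ 2 - 1) / 2 + (2 + a) * (x + 1)) (w + (2 + a)) w := by
    refine ((((hasDerivAt_pow 2 w).sub_const 1).div_const 2).add
      (((hasDerivAt_id w).add_const 1).const_mul (2 + a))).congr_deriv ?_
    simp
  have hlog : HasDerivAt (fun x : ℝ => log (-x)) w⁻¹ w := by
    refine ((hasDerivAt_log (neg_ne_zero.mpr hw)).comp w (hasDerivAt_neg w)).congr_deriv ?_
    rw [inv_neg, neg_mul_neg, mul_one]
  exact hpoly.add hlog

section

variable {a : ℝ}

theorem sq_sqrt_discr (ha : 0 ≤ a) : √(a + a ^ 2 / 4) ^ 2 = a + a ^ 2 / 4 :=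
  sq_sqrt (by positivity)

theorem wm_lt_neg_one (ha : 0 < a) : wm a < -1 := by
  have := sqrt_nonneg (a + a ^ 2 / 4)
  rw [wm]; linarith

theorem neg_one_lt_wp (ha : 0 < a) : -1 < wp a := by
  have : a / 2 < √(a + a ^ 2 / 4) := lt_sqrt_of_sq_lt (by nlinarith)
  rw [wp]; linarith

theorem wp_neg (ha : 0 ≤ a) : wp a < 0 := by
  have : √(a + a ^ 2 / 4) < 1 + a / 2 := (sqrt_lt' (by linarith)).mpr (by nlinarith)
  rw [wp]; linarith

theorem deriv_H_factor (ha : 0 ≤ a) {w : ℝ} (hw : w ≠ 0) :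
    w + (2 + a) + w⁻¹ = (w - wp a) * (w - wm a) / w := by
  have := sq_sqrt_discr ha
  rw [eq_div_iff hw, add_mul, inv_mul_cancel₀ hw, wp, wm]
  linear_combination this

theorem isMaxOn_H_wp (ha : 0 < a) : IsMaxOn (H a) (Ioo (wm a) 0) (wp a) := by
  have hwm := wm_lt_neg_one ha
  have hwp₁ := neg_one_lt_wp ha
  have hwp₀ := wp_neg ha.le
  refine isMaxOn_of_hasDerivAt_of_sign (fun w hw => hasDerivAt_H a hw.2.ne)
    ⟨by linarith, hwp₀⟩ (fun w ⟨hwm_lt, hlt_wp⟩ => ?_) (fun w ⟨hwp_lt, hlt_zero⟩ => ?_)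
  · have hw₀ : w < 0 := hlt_wp.trans hwp₀
    rw [deriv_H_factor ha.le hw₀.ne]
    exact (div_pos_of_neg_of_neg
      (mul_neg_of_neg_of_pos (sub_neg.mpr hlt_wp) (sub_pos.mpr hwm_lt)) hw₀).le
  · rw [deriv_H_factor ha.le hlt_zero.ne]
    exact (div_neg_of_pos_of_neg
      (mul_pos (sub_pos.mpr hwp_lt) (by linarith)) hlt_zero).le

theorem H_wp_eq_rStat (ha : 0 ≤ a) : H a (wp a) = rStat a := by
  have hneg : -wp a = 1 + a / 2 - √(a + a ^ 2 / 4) := by rw [wp]; ring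
  rw [H, rStat, hneg]
  have := sq_sqrt_discr ha
  rw [wp]
  linear_combination this / 2

end

theorem stmt_3 (a : ℝ) (ha : 0 < a) :
    sSup (H a '' Set.Ioo (-1 : ℝ) 0) = H a (wp a) ∧ H a (wp a) = rStat a := by
  have hwp : wp a ∈ Ioo (-1 : ℝ) 0 := ⟨neg_one_lt_wp ha, wp_neg ha.le⟩
  have hmax : IsMaxOn (H a) (Ioo (-1) 0) (wp a) :=
    (isMaxOn_H_wp ha).on_subset (Ioo_subset_Ioo_left (wm_lt_neg_one ha).le)
  refine ⟨IsGreatest.csSup_eq ⟨mem_image_of_mem _ hwp, ?_⟩, H_wp_eq_rStat ha.le⟩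
  rintro _ ⟨w, hw, rfl⟩
  exact hmax hw
end

section
/- The function φ is differentiable on (-∞,-1) and satisfies the identity φ'(z)·z·(1 + φ(z)) = (1 + z)·φ(z) for all z < -1; equivalently, φ'(z) = (1+z)φ(z) / (z(1+φ(z))). -/
/-!
The map `x ↦ x eˣ` has derivative `(1 + x) eˣ`, nonzero at `φ z > -1`, and is injective on
`(-1, ∞)`, where `φ` takes its values. Hence near `z` the function `φ` coincides with the local
inverse of `x ↦ x eˣ` composed with `x ↦ x eˣ`, and the chain rule gives
`φ'(z) = (1 + z) eᶻ / ((1 + φ z) e^{φ z})`, which is the claimed formula since `φ z e^{φ z} = z eᶻ`.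
-/

open Real Filter Topology

theorem HasStrictDerivAt.hasDerivAt_of_eventually_apply_eq {𝕜 : Type*} [NontriviallyNormedField 𝕜]
    [CompleteSpace 𝕜] {f φ h : 𝕜 → 𝕜} {U : Set 𝕜} {z f' h' : 𝕜}
    (hf : HasStrictDerivAt f f' (φ z)) (hf' : f' ≠ 0) (hU : IsOpen U) (hinj : U.InjOn f)
    (hh : HasDerivAt h h' z) (hφ : ∀ᶠ x in 𝓝 z, φ x ∈ U ∧ f (φ x) = h x) :
    HasDerivAt φ (f'⁻¹ * h') z := by
  set g := hf.localInverse f f' (φ z) hf'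
  obtain ⟨hzU, hfz⟩ := hφ.self_of_nhds
  have hg : HasStrictDerivAt g f'⁻¹ (h z) := hfz ▸ hf.to_localInverse hf'
  have hgz : g (h z) = φ z := hfz ▸ (hf.eventually_left_inverse hf').self_of_nhds
  have hright : ∀ᶠ y in 𝓝 (h z), f (g y) = y := hfz ▸ hf.eventually_right_inverse hf'
  have hgU : ∀ᶠ y in 𝓝 (h z), g y ∈ U :=
    hg.hasDerivAt.continuousAt.eventually_mem (hU.mem_nhds (hgz ▸ hzU))
  have hφg : φ =ᶠ[𝓝 z] g ∘ h := by
    filter_upwards [hφ, hh.continuousAt.eventually (hright.and hgU)] with x ⟨hxU, hfx⟩ ⟨hfg, hgx⟩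
    exact hinj hxU hgx (hfx.trans hfg.symm)
  exact (hg.hasDerivAt.comp z hh).congr_of_eventuallyEq hφg

theorem hasStrictDerivAt_mul_exp (x : ℝ) :
    HasStrictDerivAt (fun x => x * exp x) ((1 + x) * exp x) x :=
  ((hasStrictDerivAt_id x).fun_mul (hasStrictDerivAt_exp x)).congr_deriv (by simp only [id]; ring)

theorem strictMonoOn_mul_exp : StrictMonoOn (fun x => x * exp x) (Set.Ici (-1)) := by
  refine strictMonoOn_of_deriv_pos (convex_Ici _) (by fun_prop) fun x hx => ?_
  rw [interior_Ici, Set.mem_Ioi] at hx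
  rw [(hasStrictDerivAt_mul_exp x).hasDerivAt.deriv]
  have : 0 < 1 + x := by linarith
  positivity

theorem stmt_9 (φ : ℝ → ℝ)
    (hφ : ∀ z : ℝ, z < -1 → φ z ∈ Set.Ioo (-1 : ℝ) 0 ∧ φ z * Real.exp (φ z) = z * Real.exp z) :
    ∀ z : ℝ, z < -1 →
      DifferentiableAt ℝ φ z ∧
      deriv φ z * z * (1 + φ z) = (1 + z) * φ z ∧
      deriv φ z = (1 + z) * φ z / (z * (1 + φ z)) := by
  intro z hz
  obtain ⟨⟨hφz, -⟩, hwz⟩ := hφ z hz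
  have h1w : 0 < 1 + φ z := by linarith
  have hz0 : z ≠ 0 := by linarith
  have hD : HasDerivAt φ (((1 + φ z) * exp (φ z))⁻¹ * ((1 + z) * exp z)) z := by
    refine (hasStrictDerivAt_mul_exp (φ z)).hasDerivAt_of_eventually_apply_eq (by positivity)
      isOpen_Ioi (strictMonoOn_mul_exp.injOn.mono Set.Ioi_subset_Ici_self)
      (hasStrictDerivAt_mul_exp z).hasDerivAt ?_
    filter_upwards [Iio_mem_nhds hz] with x hx
    exact ⟨(hφ x hx).1.1, (hφ x hx).2⟩
  have hderiv : deriv φ z = (1 + z) * φ z / (z * (1 + φ z)) := by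
    rw [hD.deriv]
    field_simp
    linear_combination (-(1 + z)) * hwz
  refine ⟨hD.differentiableAt, ?_, hderiv⟩
  rw [hderiv]
  field_simp
end
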